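/- arXiv:1709.06278 — 4 statements merged into one kernel-verified Lean document; each statement's English description precedes it below -/
import Mathlib

section
/- (Alzer's gamma-distribution bound, the paper's Lemma 2.) For every integer M ≥ 1 and every real τ > 0, setting α = (M!)^{−1/M}, one has 1 − e^{−τ}·∑_{k=0}^{M−1} τ^k/k! ≥ (1 − e^{−ατ})^M, i.e., the CDF at τ of a Gamma(M,1) random variable is bounded below by (1 − e^{−ατ})^M; moreover the inequality is strict when M ≥ 2. -/
/-!
Put `β = α τ`. The cube `[0, β]^M` and the simplex `{t ≥ 0, ∑ tᵢ ≤ τ}` have the same volume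
`τ^M / M!`, and integrating `e^{-∑ tᵢ}` over them gives `(1 - e^{-β})^M` and the Gamma(M, 1) CDF
at `τ` respectively. The integrand is `≥ e^{-τ}` on the part of the simplex outside the cube and
`< e^{-τ}` on the part of the cube outside the simplex, and these two parts have equal volume, so
the simplex wins. For `M ≥ 2`, `M! < M^M` gives `τ < M β`: the corner of the cube then sticks out
of the simplex on a set of positive volume, and the inequality is strict.
-/

open Real Finset MeasureTheory
open scoped Nat

section Bathtub

variable {α : Type*} [MeasurableSpace α] {μ : Measure α} {s t : Set α} {f : α → ℝ} {c : ℝ}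

theorem setIntegral_le_of_le_const (hs : MeasurableSet s) (hμs : μ s ≠ ⊤)
    (hf : ∀ x ∈ s, f x ≤ c) (hfint : IntegrableOn f s μ) :
    ∫ x in s, f x ∂μ ≤ c * μ.real s := by
  rw [mul_comm, ← smul_eq_mul, ← setIntegral_const]
  exact setIntegral_mono_on hfint (integrableOn_const hμs) hs hf

theorem setIntegral_lt_of_lt_const (hs : MeasurableSet s) (hμs : μ s ≠ ⊤) (hpos : 0 < μ s)
    (hf : ∀ x ∈ s, f x < c) (hfint : IntegrableOn f s μ) :
    ∫ x in s, f x ∂μ < c * μ.real s := by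
  have hc : IntegrableOn (fun _ => c) s μ := integrableOn_const hμs
  have hgap : 0 < ∫ x in s, (c - f x) ∂μ := by
    rw [setIntegral_pos_iff_support_of_nonneg_ae
      ((ae_restrict_iff' hs).2 (ae_of_all _ fun x hx => sub_nonneg.2 (hf x hx).le))
      (hc.sub hfint)]
    exact hpos.trans_le (measure_mono fun x hx => ⟨sub_ne_zero.2 (hf x hx).ne', hx⟩)
  rw [integral_sub hc hfint, setIntegral_const, smul_eq_mul] at hgap
  linarith

theorem setIntegral_sub_setIntegral_eq_sdiff (hs : MeasurableSet s) (ht : MeasurableSet t)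
    (hfs : IntegrableOn f s μ) (hft : IntegrableOn f t μ) :
    ∫ x in t, f x ∂μ - ∫ x in s, f x ∂μ = ∫ x in t \ s, f x ∂μ - ∫ x in s \ t, f x ∂μ := by
  rw [← integral_inter_add_sdiff hs hft, ← integral_inter_add_sdiff ht hfs, Set.inter_comm]
  ring

theorem measureReal_sdiff_symm (hs : MeasurableSet s) (ht : MeasurableSet t) (hμ : μ s = μ t)
    (hfin : μ s ≠ ⊤) : μ.real (s \ t) = μ.real (t \ s) := by
  rw [measureReal_def, measureReal_def,
    measure_sdiff_symm hs.nullMeasurableSet ht.nullMeasurableSet hμ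
      (ne_top_of_le_ne_top hfin (measure_mono Set.inter_subset_left))]

theorem setIntegral_le_setIntegral_of_measure_eq (hs : MeasurableSet s) (ht : MeasurableSet t)
    (hμ : μ s = μ t) (hfin : μ s ≠ ⊤) (hfs : IntegrableOn f s μ) (hft : IntegrableOn f t μ)
    (hsf : ∀ x ∈ s \ t, c ≤ f x) (htf : ∀ x ∈ t \ s, f x ≤ c) :
    ∫ x in t, f x ∂μ ≤ ∫ x in s, f x ∂μ := by
  have hts := setIntegral_le_of_le_const (ht.diff hs)
    (measure_ne_top_of_subset Set.sdiff_subset (hμ ▸ hfin)) htf (hft.mono_set Set.sdiff_subset)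
  have hst := setIntegral_ge_of_const_le_real (hs.diff ht)
    (measure_ne_top_of_subset Set.sdiff_subset hfin) hsf (hfs.mono_set Set.sdiff_subset)
  rw [measureReal_sdiff_symm hs ht hμ hfin] at hst
  linarith [setIntegral_sub_setIntegral_eq_sdiff hs ht hfs hft]

theorem setIntegral_lt_setIntegral_of_measure_eq (hs : MeasurableSet s) (ht : MeasurableSet t)
    (hμ : μ s = μ t) (hfin : μ s ≠ ⊤) (hfs : IntegrableOn f s μ) (hft : IntegrableOn f t μ)
    (hsf : ∀ x ∈ s \ t, c ≤ f x) (htf : ∀ x ∈ t \ s, f x < c) (hpos : 0 < μ (t \ s)) :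
    ∫ x in t, f x ∂μ < ∫ x in s, f x ∂μ := by
  have hts := setIntegral_lt_of_lt_const (ht.diff hs)
    (measure_ne_top_of_subset Set.sdiff_subset (hμ ▸ hfin)) hpos htf
    (hft.mono_set Set.sdiff_subset)
  have hst := setIntegral_ge_of_const_le_real (hs.diff ht)
    (measure_ne_top_of_subset Set.sdiff_subset hfin) hsf (hfs.mono_set Set.sdiff_subset)
  rw [measureReal_sdiff_symm hs ht hμ hfin] at hst
  linarith [setIntegral_sub_setIntegral_eq_sdiff hs ht hfs hft]

end Bathtub

theorem Nat.factorial_lt_self_pow {n : ℕ} (hn : 2 ≤ n) : n ! < n ^ n := by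
  obtain ⟨m, rfl⟩ : ∃ m, n = m + 1 := ⟨n - 1, by omega⟩
  calc (m + 1)! = (m + 1) * m ! := Nat.factorial_succ m
    _ ≤ (m + 1) * m ^ m := Nat.mul_le_mul_left _ m.factorial_le_pow
    _ < (m + 1) * (m + 1) ^ m :=
        Nat.mul_lt_mul_of_pos_left (Nat.pow_lt_pow_left (by omega) (by omega)) (by omega)
    _ = (m + 1) ^ (m + 1) := Nat.pow_succ'.symm

namespace Alzer

/-- The CDF of the Gamma(n, 1) distribution; the closed form is valid only for `τ ≥ 0`. -/
noncomputable def gammaCDF (n : ℕ) (τ : ℝ) : ℝ := 1 - exp (-τ) * ∑ k ∈ range n, τ ^ k / k !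

theorem hasDerivAt_sum_range_pow_div_factorial (n : ℕ) (x : ℝ) :
    HasDerivAt (fun x : ℝ => ∑ k ∈ range (n + 1), x ^ k / k !) (∑ k ∈ range n, x ^ k / k !) x := by
  have hterm (k : ℕ) : HasDerivAt (fun x : ℝ => x ^ (k + 1) / ((k + 1)! : ℝ)) (x ^ k / k !) x := by
    refine ((hasDerivAt_pow (k + 1) x).div_const _).congr_deriv ?_
    rw [Nat.factorial_succ]
    push_cast
    field_simp
  simp_rw [sum_range_succ' _ n]
  simpa using (HasDerivAt.sum fun k _ => hterm k).add_const 1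

theorem integral_exp_neg_mul_gammaCDF (n : ℕ) (τ : ℝ) :
    ∫ s in 0..τ, exp (-s) * gammaCDF n (τ - s) = gammaCDF (n + 1) τ := by
  have hderiv (s : ℝ) : HasDerivAt
      (fun s => exp (-τ) * (∑ k ∈ range (n + 1), (τ - s) ^ k / k !) - exp (-s))
      (exp (-s) * gammaCDF n (τ - s)) s := by
    refine ((((hasDerivAt_sum_range_pow_div_factorial n (τ - s)).comp s
      ((hasDerivAt_id s).const_sub τ)).const_mul (exp (-τ))).sub
        (hasDerivAt_neg s).exp).congr_deriv ?_
    have hexp : exp (-s) * exp (-(τ - s)) = exp (-τ) := by rw [← exp_add]; ring_nf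
    rw [gammaCDF, ← hexp]
    ring
  rw [intervalIntegral.integral_eq_sub_of_hasDerivAt (fun s _ => hderiv s)
    (Continuous.intervalIntegrable (by unfold gammaCDF; fun_prop) _ _)]
  simp [gammaCDF, sum_range_succ', zero_pow]

theorem integral_sub_pow_div_factorial (n : ℕ) (τ : ℝ) :
    ∫ s in 0..τ, (τ - s) ^ n / n ! = τ ^ (n + 1) / ((n + 1)! : ℝ) := by
  rw [intervalIntegral.integral_comp_sub_left (fun u => u ^ n / n !) τ, sub_self, sub_zero,
    intervalIntegral.integral_div, integral_pow, Nat.factorial_succ]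
  push_cast
  field_simp
  ring

def cube (n : ℕ) (β : ℝ) : Set (Fin n → ℝ) := Set.univ.pi fun _ => Set.Icc 0 β

theorem isCompact_cube (n : ℕ) (β : ℝ) : IsCompact (cube n β) :=
  isCompact_univ_pi fun _ => isCompact_Icc

def simplex (n : ℕ) (τ : ℝ) : Set (Fin n → ℝ) := {t | (∀ i, 0 ≤ t i) ∧ ∑ i, t i ≤ τ}

theorem simplex_subset_cube (n : ℕ) (τ : ℝ) : simplex n τ ⊆ cube n τ := fun _ ht i _ =>
  ⟨ht.1 i, (single_le_sum (fun j _ => ht.1 j) (mem_univ i)).trans ht.2⟩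

theorem isCompact_simplex (n : ℕ) (τ : ℝ) : IsCompact (simplex n τ) := by
  refine (isCompact_cube n τ).of_isClosed_subset ?_ (simplex_subset_cube n τ)
  simp only [simplex, Set.ofPred_and, Set.ofPred_forall]
  exact (isClosed_iInter fun i => isClosed_le continuous_const (continuous_apply i)).inter
    (isClosed_le (by fun_prop) continuous_const)

theorem measurableSet_simplex (n : ℕ) (τ : ℝ) : MeasurableSet (simplex n τ) :=
  (isCompact_simplex n τ).measurableSet

theorem simplex_zero {τ : ℝ} (hτ : 0 ≤ τ) : simplex 0 τ = Set.univ := by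
  ext t; simp [simplex, hτ]

theorem cons_mem_simplex_succ_iff {n : ℕ} {τ s : ℝ} {y : Fin n → ℝ} :
    Fin.cons s y ∈ simplex (n + 1) τ ↔ s ∈ Set.Icc 0 τ ∧ y ∈ simplex n (τ - s) := by
  simp only [simplex, Set.mem_ofPred_eq, Fin.forall_fin_succ, Fin.cons_zero, Fin.cons_succ,
    Fin.sum_cons, Set.mem_Icc]
  constructor
  · rintro ⟨⟨hs, hy⟩, hsum⟩
    exact ⟨⟨hs, by linarith [sum_nonneg fun i (_ : i ∈ univ) => hy i]⟩, hy, by linarith⟩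
  · rintro ⟨⟨hs, -⟩, hy, hsum⟩
    exact ⟨⟨hs, hy⟩, by linarith⟩

theorem setIntegral_simplex_succ {n : ℕ} {τ : ℝ} (hτ : 0 ≤ τ)
    {F : (Fin (n + 1) → ℝ) → ℝ} (hF : Continuous F) :
    ∫ t in simplex (n + 1) τ, F t = ∫ s in 0..τ, ∫ y in simplex n (τ - s), F (Fin.cons s y) := by
  set e := MeasurableEquiv.piFinSuccAbove (fun _ : Fin (n + 1) => ℝ) 0
  have he : MeasurePreserving e.symm (volume.prod volume) volume :=
    (volume_preserving_piFinSuccAbove (fun _ : Fin (n + 1) => ℝ) 0).symm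
  have he_apply (p : ℝ × (Fin n → ℝ)) : e.symm p = Fin.cons p.1 p.2 := Fin.insertNth_zero' _ _
  have hind (p : ℝ × (Fin n → ℝ)) : (simplex (n + 1) τ).indicator F (e.symm p) =
      (Set.Icc 0 τ).indicator
        (fun s => (simplex n (τ - s)).indicator (fun y => F (Fin.cons s y)) p.2) p.1 := by
    rw [he_apply]
    by_cases h : p.1 ∈ Set.Icc 0 τ ∧ p.2 ∈ simplex n (τ - p.1)
    · rw [Set.indicator_of_mem (cons_mem_simplex_succ_iff.2 h), Set.indicator_of_mem h.1,
        Set.indicator_of_mem h.2]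
    · rw [Set.indicator_of_notMem (mt cons_mem_simplex_succ_iff.1 h)]
      by_cases h1 : p.1 ∈ Set.Icc 0 τ
      · rw [Set.indicator_of_mem h1, Set.indicator_of_notMem fun h2 => h ⟨h1, h2⟩]
      · rw [Set.indicator_of_notMem h1]
  have hint : Integrable (fun p => (simplex (n + 1) τ).indicator F (e.symm p))
      (volume.prod volume) :=
    (he.integrable_comp_emb e.symm.measurableEmbedding).2 <|
      (hF.continuousOn.integrableOn_compact (isCompact_simplex _ _)).integrable_indicator
        (measurableSet_simplex _ _)
  have hslice (s : ℝ) : ∫ y, (Set.Icc 0 τ).indicator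
        (fun s => (simplex n (τ - s)).indicator (fun y => F (Fin.cons s y)) y) s =
      (Set.Icc 0 τ).indicator (fun s => ∫ y in simplex n (τ - s), F (Fin.cons s y)) s := by
    by_cases hs : s ∈ Set.Icc 0 τ
    · simp only [Set.indicator_of_mem hs]
      exact integral_indicator (measurableSet_simplex _ _)
    · simp only [Set.indicator_of_notMem hs, integral_zero]
  calc ∫ t in simplex (n + 1) τ, F t
      = ∫ p, (simplex (n + 1) τ).indicator F (e.symm p) ∂(volume.prod volume) := by
        rw [← integral_indicator (measurableSet_simplex _ _), he.integral_comp']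
    _ = ∫ s, ∫ y, (Set.Icc 0 τ).indicator
          (fun s => (simplex n (τ - s)).indicator (fun y => F (Fin.cons s y)) y) s := by
        rw [integral_prod _ hint]
        simp only [hind]
    _ = ∫ s in 0..τ, ∫ y in simplex n (τ - s), F (Fin.cons s y) := by
        rw [integral_congr_ae (ae_of_all _ hslice), integral_indicator measurableSet_Icc,
          integral_Icc_eq_integral_Ioc, intervalIntegral.integral_of_le hτ]

theorem integral_exp_neg_sum_simplex (n : ℕ) {τ : ℝ} (hτ : 0 ≤ τ) :
    ∫ t in simplex n τ, exp (-∑ i, t i) = gammaCDF n τ := by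
  induction n generalizing τ with
  | zero => simp [simplex_zero hτ, gammaCDF, measureReal_def, volume_pi]
  | succ n ih =>
    rw [setIntegral_simplex_succ hτ (by fun_prop), ← integral_exp_neg_mul_gammaCDF]
    refine intervalIntegral.integral_congr fun s hs => ?_
    rw [Set.uIcc_of_le hτ] at hs
    simp only [Fin.sum_cons, neg_add, exp_add]
    rw [integral_const_mul, ih (sub_nonneg.2 hs.2)]

theorem measureReal_simplex (n : ℕ) {τ : ℝ} (hτ : 0 ≤ τ) :
    volume.real (simplex n τ) = τ ^ n / n ! := by
  induction n generalizing τ with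
  | zero => simp [simplex_zero hτ, measureReal_def, volume_pi]
  | succ n ih =>
    rw [← mul_one (volume.real _), ← smul_eq_mul, ← setIntegral_const,
      setIntegral_simplex_succ hτ continuous_const, ← integral_sub_pow_div_factorial]
    refine intervalIntegral.integral_congr fun s hs => ?_
    rw [Set.uIcc_of_le hτ] at hs
    rw [setIntegral_const, ih (sub_nonneg.2 hs.2), smul_eq_mul, mul_one]

theorem volume_cube (n : ℕ) {β : ℝ} (hβ : 0 ≤ β) :
    volume (cube n β) = ENNReal.ofReal (β ^ n) := by
  simp [cube, Real.volume_Icc_pi, ENNReal.ofReal_pow hβ]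

theorem integral_exp_neg_sum_cube (n : ℕ) {β : ℝ} (hβ : 0 ≤ β) :
    ∫ t in cube n β, exp (-∑ i, t i) = (1 - exp (-β)) ^ n := by
  have h1 : ∫ x in Set.Icc 0 β, exp (-x) = 1 - exp (-β) := by
    rw [integral_Icc_eq_integral_Ioc, ← intervalIntegral.integral_of_le hβ,
      intervalIntegral.integral_comp_neg (fun x => exp x), integral_exp, neg_zero, exp_zero]
  simp_rw [cube, volume_pi, Measure.restrict_pi_pi, ← sum_neg_distrib, exp_sum]
  rw [integral_fintype_prod_eq_pow (fun x => exp (-x)), h1, Fintype.card_fin]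

theorem volume_cube_sdiff_simplex_pos {n : ℕ} {τ β : ℝ} (hτ : 0 ≤ τ) (h : τ < n * β) :
    0 < volume (cube n β \ simplex n τ) := by
  have hn : (0 : ℝ) < n := by
    rcases Nat.eq_zero_or_pos n with rfl | hn
    · simp only [Nat.cast_zero, zero_mul] at h
      linarith
    · exact_mod_cast hn
  have hlt : τ / n < β := (div_lt_iff₀' hn).2 h
  have hsub : (Set.univ.pi fun _ => Set.Ioc (τ / n) β) ⊆ cube n β \ simplex n τ := by
    intro t ht
    have ht' (i : Fin n) : t i ∈ Set.Ioc (τ / n) β := ht i (Set.mem_univ i)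
    refine ⟨fun i _ => ⟨(div_nonneg hτ hn.le).trans (ht' i).1.le, (ht' i).2⟩, fun hs => ?_⟩
    have hsum : ∑ _ : Fin n, τ / n < ∑ i, t i :=
      sum_lt_sum_of_nonempty (univ_nonempty_iff.2 ⟨⟨0, by exact_mod_cast hn⟩⟩)
        fun i _ => (ht' i).1
    simp only [sum_const, card_univ, Fintype.card_fin, nsmul_eq_mul] at hsum
    rw [mul_div_cancel₀ _ hn.ne'] at hsum
    linarith [hs.2]
  refine lt_of_lt_of_le ?_ (measure_mono hsub)
  simpa [volume_pi_pi] using ENNReal.pow_pos (ENNReal.ofReal_pos.2 (sub_pos.2 hlt)) n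

theorem pow_one_sub_exp_neg_le_gammaCDF {n : ℕ} {τ β : ℝ} (hτ : 0 ≤ τ) (hβ : 0 ≤ β)
    (hvol : β ^ n = τ ^ n / n !) :
    (1 - exp (-β)) ^ n ≤ gammaCDF n τ ∧ (τ < n * β → (1 - exp (-β)) ^ n < gammaCDF n τ) := by
  rw [← integral_exp_neg_sum_cube n hβ, ← integral_exp_neg_sum_simplex n hτ]
  have hfin : volume (simplex n τ) ≠ ⊤ := (isCompact_simplex n τ).measure_ne_top
  have hμ : volume (simplex n τ) = volume (cube n β) := by
    rw [volume_cube n hβ, hvol, ← measureReal_simplex n hτ, ofReal_measureReal hfin]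
  have hint {s : Set (Fin n → ℝ)} (hs : IsCompact s) :
      IntegrableOn (fun t => exp (-∑ i, t i)) s :=
    (by fun_prop : Continuous fun t : Fin n → ℝ => exp (-∑ i, t i)).continuousOn
      |>.integrableOn_compact hs
  have hsf : ∀ t ∈ simplex n τ \ cube n β, exp (-τ) ≤ exp (-∑ i, t i) := fun t ht =>
    exp_le_exp.2 (neg_le_neg ht.1.2)
  have htf : ∀ t ∈ cube n β \ simplex n τ, exp (-∑ i, t i) < exp (-τ) := fun t ht =>
    exp_lt_exp.2 <| neg_lt_neg <| not_le.1 fun h => ht.2 ⟨fun i => (ht.1 i trivial).1, h⟩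
  have hcube := isCompact_cube n β
  exact ⟨setIntegral_le_setIntegral_of_measure_eq (measurableSet_simplex n τ) hcube.measurableSet
      hμ hfin (hint (isCompact_simplex n τ)) (hint hcube) hsf fun t ht => (htf t ht).le,
    fun h => setIntegral_lt_setIntegral_of_measure_eq (measurableSet_simplex n τ)
      hcube.measurableSet hμ hfin (hint (isCompact_simplex n τ)) (hint hcube) hsf htf
      (volume_cube_sdiff_simplex_pos hτ h)⟩

theorem lt_mul_of_pow_eq_pow_div_factorial {n : ℕ} {τ β : ℝ} (hn : 2 ≤ n) (hτ : 0 < τ)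
    (hβ : 0 ≤ β) (hvol : β ^ n = τ ^ n / n !) : τ < n * β := by
  have hfac : (n ! : ℝ) < (n : ℝ) ^ n := by exact_mod_cast Nat.factorial_lt_self_pow hn
  refine (pow_lt_pow_iff_left₀ hτ.le (by positivity) (by omega : n ≠ 0)).1 ?_
  rw [mul_pow, hvol, mul_div_assoc', lt_div_iff₀ (by positivity), mul_comm _ (τ ^ n)]
  exact mul_lt_mul_of_pos_left hfac (pow_pos hτ n)

end Alzer

open Alzer in
/-- **Alzer's gamma-distribution bound** (the paper's Lemma 2): for an integer `M ≥ 1` and real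
`τ > 0`, with `α = (M!)^{−1/M}`, one has
`1 − e^{−τ}·∑_{k=0}^{M−1} τ^k/k! ≥ (1 − e^{−ατ})^M`, with strict inequality when `M ≥ 2`. -/
theorem alzer_gamma_cdf_lower_bound (M : ℕ) (hM : 1 ≤ M) (τ : ℝ) (hτ : 0 < τ)
    (α : ℝ) (hα : α = (M.factorial : ℝ) ^ (-(1 : ℝ) / (M : ℝ))) :
    (1 - Real.exp (-(α * τ))) ^ M ≤
      1 - Real.exp (-τ) * ∑ k ∈ Finset.range M, τ ^ k / (k.factorial : ℝ) ∧
    (2 ≤ M →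
      (1 - Real.exp (-(α * τ))) ^ M <
        1 - Real.exp (-τ) * ∑ k ∈ Finset.range M, τ ^ k / (k.factorial : ℝ)) := by
  have hα_pos : 0 < α := hα ▸ rpow_pos_of_pos (by positivity) _
  have hα_pow : α ^ M = (M ! : ℝ)⁻¹ := by
    rw [hα, neg_div, rpow_neg (by positivity), inv_pow, one_div,
      rpow_inv_natCast_pow (by positivity) (by omega)]
  have hvol : (α * τ) ^ M = τ ^ M / M ! := by rw [mul_pow, hα_pow]; ring
  have hβ : 0 ≤ α * τ := (mul_pos hα_pos hτ).le
  exact (pow_one_sub_exp_neg_le_gammaCDF hτ.le hβ hvol).imp_right fun hlt hM2 =>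
    hlt (lt_mul_of_pow_eq_pow_div_factorial hM2 hτ hβ hvol)
end

section
/- Let I be a nonnegative real-valued random variable on a probability space and define its Laplace transform L(s) = E[e^{−sI}] for s > 0. Then L is infinitely differentiable on (0,∞), and for every integer N ≥ 1, every s > 0, and every Gamma(N,1)-distributed random variable g independent of I, one has P(g > s·I) = ∑_{m=0}^{N−1} ((−s)^m/m!)·L^{(m)}(s), where L^{(m)} denotes the m-th derivative. (This is step (a) in the proof of the paper's Theorem 1, expressing the successful transmission probability through derivatives of the interference Laplace transform.) -/
open MeasureTheory ProbabilityTheory Finset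

namespace ProbGammaAux

noncomputable def psum (N : ℕ) (x : ℝ) : ℝ := ∑ m ∈ Finset.range N, x ^ m / m.factorial

lemma psum_nonneg {N : ℕ} {x : ℝ} (hx : 0 ≤ x) : 0 ≤ psum N x :=
  Finset.sum_nonneg fun m _ => by positivity

lemma aux_bound {x c : ℝ} (hx : 0 ≤ x) (hc : 0 < c) (m : ℕ) :
    x ^ m * Real.exp (-(c * x)) ≤ (m.factorial : ℝ) / c ^ m := by
  have h1 : (c * x) ^ m ≤ (m.factorial : ℝ) * Real.exp (c * x) := by
    have h := Real.pow_div_factorial_le_exp (x := c * x) (mul_nonneg hc.le hx) m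
    rw [div_le_iff₀ (by positivity)] at h
    linarith [h]
  rw [le_div_iff₀ (by positivity : (0:ℝ) < c ^ m)]
  calc x ^ m * Real.exp (-(c * x)) * c ^ m
      = (c * x) ^ m * Real.exp (-(c * x)) := by rw [mul_pow]; ring
    _ ≤ ((m.factorial : ℝ) * Real.exp (c * x)) * Real.exp (-(c * x)) :=
        mul_le_mul_of_nonneg_right h1 (Real.exp_pos _).le
    _ = (m.factorial : ℝ) := by rw [mul_assoc, ← Real.exp_add]; simp

lemma hasDerivAt_psum (n : ℕ) (x : ℝ) :
    HasDerivAt (psum (n + 1)) (psum n x) x := by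
  induction n with
  | zero =>
    have h : psum 1 = fun _ : ℝ => (1 : ℝ) := by funext y; simp [psum]
    rw [h]
    simpa [psum] using hasDerivAt_const x (1 : ℝ)
  | succ n ih =>
    have h : psum (n + 2) = fun y : ℝ =>
        psum (n + 1) y + y ^ (n + 1) / ((n + 1).factorial : ℝ) := by
      funext y; simp [psum, Finset.sum_range_succ]
    rw [h]
    have h2 := ih.add ((hasDerivAt_pow (n + 1) x).div_const ((n + 1).factorial : ℝ))
    refine h2.congr_deriv (Eq.symm ?_)
    have h3 : psum (n + 1) x = psum n x + x ^ n / (n.factorial : ℝ) := by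
      simp [psum, Finset.sum_range_succ]
    rw [h3, Nat.factorial_succ]
    have hf : (0:ℝ) < n.factorial := by positivity
    push_cast
    field_simp

lemma hasDerivAt_G (n : ℕ) (x : ℝ) :
    HasDerivAt (fun y => Real.exp (-y) * psum (n + 1) y)
      (-(x ^ n * Real.exp (-x) / (n.factorial : ℝ))) x := by
  have he : HasDerivAt (fun y : ℝ => Real.exp (-y)) (-Real.exp (-x)) x := by
    simpa using ((hasDerivAt_id x).neg).exp
  have h := he.mul (hasDerivAt_psum n x)
  refine h.congr_deriv (Eq.symm ?_)
  have h3 : psum (n + 1) x = psum n x + x ^ n / (n.factorial : ℝ) := by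
    simp [psum, Finset.sum_range_succ]
  rw [h3]
  ring

lemma tendsto_G (n : ℕ) :
    Filter.Tendsto (fun y => Real.exp (-y) * psum (n + 1) y) Filter.atTop (nhds 0) := by
  have h : (fun y => Real.exp (-y) * psum (n + 1) y) =
      fun y => ∑ m ∈ Finset.range (n + 1), (y ^ m * Real.exp (-y)) / (m.factorial : ℝ) := by
    funext y
    rw [psum, Finset.mul_sum]
    exact Finset.sum_congr rfl fun m _ => by ring
  rw [h]
  have := tendsto_finset_sum (Finset.range (n + 1)) (fun m _ =>
    (Real.tendsto_pow_mul_exp_neg_atTop_nhds_zero m).div_const (m.factorial : ℝ))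
  simpa using this

lemma gamma_tail (n : ℕ) {x : ℝ} (hx : 0 ≤ x) :
    gammaMeasure ((n + 1 : ℕ) : ℝ) 1 (Set.Ioi x) =
      ENNReal.ofReal (Real.exp (-x) * psum (n + 1) x) := by
  have hderiv : ∀ y ∈ Set.Ici x, HasDerivAt (fun y => -(Real.exp (-y) * psum (n + 1) y))
      (y ^ n * Real.exp (-y) / (n.factorial : ℝ)) y := by
    intro y _
    exact (hasDerivAt_G n y).neg.congr_deriv (neg_neg _)
  have hpos : ∀ y ∈ Set.Ioi x, 0 ≤ y ^ n * Real.exp (-y) / (n.factorial : ℝ) := by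
    intro y hy
    have hy0 : (0:ℝ) ≤ y := le_trans hx (le_of_lt hy)
    positivity
  have htend : Filter.Tendsto (fun y => -(Real.exp (-y) * psum (n + 1) y))
      Filter.atTop (nhds 0) := by
    simpa using (tendsto_G n).neg
  have hint : IntegrableOn (fun y => y ^ n * Real.exp (-y) / (n.factorial : ℝ)) (Set.Ioi x) :=
    integrableOn_Ioi_deriv_of_nonneg' hderiv hpos htend
  have hval : ∫ y in Set.Ioi x, y ^ n * Real.exp (-y) / (n.factorial : ℝ) =
      Real.exp (-x) * psum (n + 1) x := by
    rw [integral_Ioi_of_hasDerivAt_of_nonneg' hderiv hpos htend]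
    ring
  rw [gammaMeasure, withDensity_apply _ measurableSet_Ioi]
  have hpdf : ∀ᵐ t ∂(volume.restrict (Set.Ioi x)), gammaPDF ((n + 1 : ℕ) : ℝ) 1 t =
      ENNReal.ofReal (t ^ n * Real.exp (-t) / (n.factorial : ℝ)) := by
    rw [ae_restrict_iff' measurableSet_Ioi]
    refine ae_of_all _ fun t ht => ?_
    have ht0 : (0:ℝ) ≤ t := le_trans hx (le_of_lt ht)
    rw [gammaPDF_of_nonneg ht0]
    congr 1
    have h1 : ((n + 1 : ℕ) : ℝ) = (n : ℝ) + 1 := by push_cast; ring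
    rw [h1, Real.one_rpow, Real.Gamma_nat_eq_factorial]
    have h2 : ((n : ℝ) + 1) - 1 = (n : ℝ) := by ring
    rw [h2, Real.rpow_natCast]
    rw [one_mul]
    ring
  rw [lintegral_congr_ae hpdf, ← ofReal_integral_eq_lintegral_ofReal hint]
  · rw [hval]
  · rw [Filter.EventuallyLE, ae_restrict_iff' measurableSet_Ioi]
    refine ae_of_all _ fun y hy => ?_
    simpa using hpos y hy

end ProbGammaAux

open ProbGammaAux

/-- Step (a) in the proof of the paper's Theorem 1: for a nonnegative random variable `I` with
Laplace transform `L(s) = E[e^{−sI}]`, the function `L` is infinitely differentiable on `(0,∞)`,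
and for every integer `N ≥ 1`, every `s > 0` and every `Gamma(N,1)`-distributed random variable `g`
independent of `I`, `P(g > s·I) = ∑_{m=0}^{N−1} ((−s)^m/m!)·L^{(m)}(s)`. -/
theorem prob_gamma_gt_eq_sum_iteratedDeriv_laplace
    {Ω : Type*} [MeasurableSpace Ω] (μ : Measure Ω) [IsProbabilityMeasure μ]
    (I : Ω → ℝ) (hIm : Measurable I) (hI0 : ∀ ω, 0 ≤ I ω)
    (L : ℝ → ℝ) (hL : ∀ s : ℝ, L s = ∫ ω, Real.exp (-s * I ω) ∂μ) :
    ContDiffOn ℝ (⊤ : ℕ∞) L (Set.Ioi 0) ∧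
    ∀ (N : ℕ), 1 ≤ N → ∀ s : ℝ, 0 < s → ∀ g : Ω → ℝ, Measurable g →
      Measure.map g μ = gammaMeasure (N : ℝ) 1 → IndepFun g I μ →
      μ {ω | s * I ω < g ω} =
        ENNReal.ofReal (∑ m ∈ Finset.range N,
          ((-s) ^ m / (m.factorial : ℝ)) * iteratedDerivWithin m L (Set.Ioi 0) s) := by
  -- measurability of the integrands
  have hmeas : ∀ (m : ℕ) (t : ℝ),
      AEStronglyMeasurable (fun ω => I ω ^ m * Real.exp (-(t * I ω))) μ :=
    fun m t => ((hIm.pow_const m).mul ((hIm.const_mul t).neg.exp)).aestronglyMeasurable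
  -- uniform bound
  have hbound : ∀ (m : ℕ) (t : ℝ), 0 < t → ∀ ω,
      ‖I ω ^ m * Real.exp (-(t * I ω))‖ ≤ (m.factorial : ℝ) / t ^ m := by
    intro m t ht ω
    have hx : (0:ℝ) ≤ I ω := hI0 ω
    rw [Real.norm_eq_abs, abs_of_nonneg (by positivity)]
    exact aux_bound hx ht m
  -- integrability
  have hint : ∀ (m : ℕ) (t : ℝ), 0 < t →
      Integrable (fun ω => I ω ^ m * Real.exp (-(t * I ω))) μ := by
    intro m t ht
    exact ⟨hmeas m t, HasFiniteIntegral.of_bounded (ae_of_all _ (hbound m t ht))⟩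
  -- derivatives of the moment integrals
  have hA : ∀ (m : ℕ) (s : ℝ), 0 < s →
      HasDerivAt (fun u => ∫ ω, I ω ^ m * Real.exp (-(u * I ω)) ∂μ)
        (-(∫ ω, I ω ^ (m + 1) * Real.exp (-(s * I ω)) ∂μ)) s := by
    intro m s hs
    have key := hasDerivAt_integral_of_dominated_loc_of_deriv_le (μ := μ)
      (F := fun t ω => I ω ^ m * Real.exp (-(t * I ω)))
      (F' := fun t ω => -(I ω ^ (m + 1) * Real.exp (-(t * I ω))))
      (x₀ := s)
      (bound := fun _ => ((m + 1).factorial : ℝ) / (s / 2) ^ (m + 1))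
      (Metric.ball_mem_nhds _ (half_pos hs))
      (Filter.Eventually.of_forall fun t => hmeas m t)
      (hint m s hs)
      ((hmeas (m + 1) s).neg)
      (ae_of_all _ fun ω t htb => by
        have ht2 : s / 2 < t := by
          have h := Metric.mem_ball.mp htb
          rw [Real.dist_eq, abs_lt] at h
          linarith [h.1]
        have hx : (0:ℝ) ≤ I ω := hI0 ω
        rw [norm_neg]
        calc ‖I ω ^ (m + 1) * Real.exp (-(t * I ω))‖
            = I ω ^ (m + 1) * Real.exp (-(t * I ω)) := by
              rw [Real.norm_eq_abs, abs_of_nonneg (by positivity)]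
          _ ≤ I ω ^ (m + 1) * Real.exp (-(s / 2 * I ω)) := by
              have hle : -(t * I ω) ≤ -(s / 2 * I ω) := by nlinarith
              exact mul_le_mul_of_nonneg_left (Real.exp_le_exp.mpr hle) (by positivity)
          _ ≤ ((m + 1).factorial : ℝ) / (s / 2) ^ (m + 1) :=
              aux_bound hx (half_pos hs) (m + 1))
      (integrable_const _)
      (ae_of_all _ fun ω t _ => by
        have h1 : HasDerivAt (fun t : ℝ => -(t * I ω)) (-(I ω)) t :=
          (hasDerivAt_mul_const (I ω)).neg
        have h2 := (h1.exp).const_mul (I ω ^ m)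
        have h3 : I ω ^ m * (Real.exp (-(t * I ω)) * -(I ω)) =
            -(I ω ^ (m + 1) * Real.exp (-(t * I ω))) := by
          rw [pow_succ]; ring
        rw [h3] at h2
        exact h2)
    have h2 := key.2
    rw [integral_neg] at h2
    exact h2
  -- iterated derivatives of L
  have hiter : ∀ m : ℕ, Set.EqOn (iteratedDerivWithin m L (Set.Ioi 0))
      (fun s => (-1 : ℝ) ^ m * ∫ ω, I ω ^ m * Real.exp (-(s * I ω)) ∂μ) (Set.Ioi 0) := by
    intro m
    induction m with
    | zero =>
      intro s hs
      simp only [iteratedDerivWithin_zero, pow_zero, one_mul]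
      rw [hL s]
      congr 1
      funext ω
      rw [neg_mul]
    | succ m ih =>
      intro s hs
      rw [iteratedDerivWithin_succ,
        derivWithin_of_isOpen isOpen_Ioi hs]
      have heq : iteratedDerivWithin m L (Set.Ioi 0) =ᶠ[nhds s]
          fun u => (-1 : ℝ) ^ m * ∫ ω, I ω ^ m * Real.exp (-(u * I ω)) ∂μ :=
        Filter.eventuallyEq_of_mem (isOpen_Ioi.mem_nhds hs) ih
      rw [heq.deriv_eq]
      rw [((hA m s hs).const_mul ((-1 : ℝ) ^ m)).deriv]
      rw [pow_succ]
      ring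
  -- analyticity of L on (0, ∞) via its complex extension
  have hLC : DifferentiableOn ℂ (fun z => ∫ ω, Complex.exp (-(z * (I ω : ℂ))) ∂μ)
      {z : ℂ | 0 < z.re} := by
    intro z₀ hz₀
    have hre : (0:ℝ) < z₀.re := hz₀
    have hmeasC : ∀ t : ℂ,
        AEStronglyMeasurable (fun ω => Complex.exp (-(t * (I ω : ℂ)))) μ := fun t =>
      ((((Complex.measurable_ofReal.comp hIm).const_mul t).neg).cexp).aestronglyMeasurable
    have hnorm : ∀ (t : ℂ) (ω : Ω),
        ‖Complex.exp (-(t * (I ω : ℂ)))‖ = Real.exp (-(t.re * I ω)) := by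
      intro t ω
      rw [Complex.norm_exp]
      congr 1
      simp [Complex.mul_re]
    have key := hasDerivAt_integral_of_dominated_loc_of_deriv_le (μ := μ)
      (F := fun (t : ℂ) ω => Complex.exp (-(t * (I ω : ℂ))))
      (F' := fun (t : ℂ) ω => -((I ω : ℂ) * Complex.exp (-(t * (I ω : ℂ)))))
      (x₀ := z₀)
      (bound := fun _ => ((1 : ℕ).factorial : ℝ) / (z₀.re / 2) ^ 1)
      (Metric.ball_mem_nhds _ (half_pos hre))
      (Filter.Eventually.of_forall fun t => hmeasC t)
      ⟨hmeasC z₀, HasFiniteIntegral.of_bounded (C := 1) (ae_of_all _ fun ω => by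
        rw [hnorm z₀ ω]
        exact Real.exp_le_one_iff.mpr (by nlinarith [hI0 ω]))⟩
      (((Complex.measurable_ofReal.comp hIm).mul
        ((((Complex.measurable_ofReal.comp hIm).const_mul z₀).neg).cexp)).neg).aestronglyMeasurable
      (ae_of_all _ fun ω t htb => by
        have ht2 : z₀.re / 2 < t.re := by
          have h := Metric.mem_ball.mp htb
          have h2 : |t.re - z₀.re| ≤ ‖t - z₀‖ := by
            simpa using Complex.abs_re_le_norm (t - z₀)
          rw [Complex.dist_eq] at h
          rw [abs_le] at h2
          linarith [h2.1]
        have hx : (0:ℝ) ≤ I ω := hI0 ω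
        rw [norm_neg, norm_mul, hnorm t ω]
        calc ‖((I ω : ℂ))‖ * Real.exp (-(t.re * I ω))
            = I ω * Real.exp (-(t.re * I ω)) := by
              rw [Complex.norm_real, Real.norm_eq_abs, abs_of_nonneg hx]
          _ ≤ I ω * Real.exp (-(z₀.re / 2 * I ω)) := by
              have hle : -(t.re * I ω) ≤ -(z₀.re / 2 * I ω) := by nlinarith
              exact mul_le_mul_of_nonneg_left (Real.exp_le_exp.mpr hle) hx
          _ ≤ ((1 : ℕ).factorial : ℝ) / (z₀.re / 2) ^ 1 := by
              have := aux_bound hx (half_pos hre) 1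
              rwa [pow_one] at this)
      (integrable_const _)
      (ae_of_all _ fun ω t _ => by
        have h1 : HasDerivAt (fun t : ℂ => -(t * (I ω : ℂ))) (-(I ω : ℂ)) t :=
          (hasDerivAt_mul_const ((I ω : ℂ))).neg
        have h2 := h1.cexp
        have h3 : Complex.exp (-(t * (I ω : ℂ))) * -(I ω : ℂ) =
            -((I ω : ℂ) * Complex.exp (-(t * (I ω : ℂ)))) := by ring
        rw [h3] at h2
        exact h2)
    exact key.2.differentiableAt.differentiableWithinAt
  have hOpenHalf : IsOpen {z : ℂ | 0 < z.re} := isOpen_lt continuous_const Complex.continuous_re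
  have hAn : AnalyticOnNhd ℂ (fun z => ∫ ω, Complex.exp (-(z * (I ω : ℂ))) ∂μ)
      {z : ℂ | 0 < z.re} := hLC.analyticOnNhd hOpenHalf
  have hLre : ∀ s : ℝ, (∫ ω, Complex.exp (-((s : ℂ) * (I ω : ℂ))) ∂μ) = ((L s : ℝ) : ℂ) := by
    intro s
    have he : (fun ω => Complex.exp (-((s : ℂ) * (I ω : ℂ)))) =
        fun ω => ((Real.exp (-s * I ω) : ℝ) : ℂ) := by
      funext ω
      rw [Complex.ofReal_exp]
      congr 1
      push_cast
      ring
    rw [he, hL s]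
    exact _root_.integral_ofReal
  have hsmooth : ContDiffOn ℝ (⊤ : ℕ∞) L (Set.Ioi 0) := by
    have h1 : AnalyticOnNhd ℝ (fun z => ∫ ω, Complex.exp (-(z * (I ω : ℂ))) ∂μ)
        {z : ℂ | 0 < z.re} := hAn.restrictScalars
    have h2 : AnalyticOnNhd ℝ (fun s : ℝ => (s : ℂ)) (Set.Ioi 0) := fun x _ =>
      Complex.ofRealCLM.analyticOnNhd Set.univ x (Set.mem_univ x)
    have h3 : AnalyticOnNhd ℝ
        ((fun z => ∫ ω, Complex.exp (-(z * (I ω : ℂ))) ∂μ) ∘ (fun s : ℝ => (s : ℂ)))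
        (Set.Ioi 0) := h1.comp h2 (fun x hx => by simpa using (hx : (0:ℝ) < x))
    have h4 : AnalyticOnNhd ℝ (fun z : ℂ => z.re) Set.univ :=
      Complex.reCLM.analyticOnNhd Set.univ
    have h5 : AnalyticOnNhd ℝ
        ((fun z : ℂ => z.re) ∘ ((fun z => ∫ ω, Complex.exp (-(z * (I ω : ℂ))) ∂μ) ∘
          (fun s : ℝ => (s : ℂ)))) (Set.Ioi 0) :=
      AnalyticOnNhd.comp (fun x _ => h4 x (Set.mem_univ x)) h3 (Set.mapsTo_univ _ _)
    have h6 : Set.EqOn ((fun z : ℂ => z.re) ∘ ((fun z => ∫ ω, Complex.exp (-(z * (I ω : ℂ))) ∂μ) ∘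
        (fun s : ℝ => (s : ℂ)))) L (Set.Ioi 0) := by
      intro s _
      simp only [Function.comp_apply, hLre s, Complex.ofReal_re]
    exact ((h5.congr isOpen_Ioi h6).contDiffOn (isOpen_Ioi.uniqueDiffOn))
  refine ⟨hsmooth, ?_⟩
  intro N hN s hs g hgm hgmap hindep
  obtain ⟨n, rfl⟩ : ∃ n, N = n + 1 := ⟨N - 1, (Nat.succ_pred_eq_of_pos hN).symm⟩
  haveI : IsProbabilityMeasure (gammaMeasure ((n + 1 : ℕ) : ℝ) 1) :=
    isProbabilityMeasure_gammaMeasure (by positivity) one_pos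
  have hT : MeasurableSet {p : ℝ × ℝ | s * p.1 < p.2} :=
    measurableSet_lt (measurable_fst.const_mul s) measurable_snd
  have hmap2 : Measure.map (fun ω => (I ω, g ω)) μ =
      (Measure.map I μ).prod (gammaMeasure ((n + 1 : ℕ) : ℝ) 1) := by
    rw [← hgmap]
    exact (indepFun_iff_map_prod_eq_prod_map_map hIm.aemeasurable hgm.aemeasurable).mp hindep.symm
  have step1 : μ {ω | s * I ω < g ω} =
      ∫⁻ ω, gammaMeasure ((n + 1 : ℕ) : ℝ) 1 (Set.Ioi (s * I ω)) ∂μ := by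
    have h0 : μ {ω | s * I ω < g ω} =
        Measure.map (fun ω => (I ω, g ω)) μ {p : ℝ × ℝ | s * p.1 < p.2} := by
      rw [Measure.map_apply (hIm.prodMk hgm) hT]
      rfl
    rw [h0, hmap2, Measure.prod_apply hT,
      lintegral_map (measurable_measure_prodMk_left hT) hIm]
    rfl
  have step2 : ∫⁻ ω, gammaMeasure ((n + 1 : ℕ) : ℝ) 1 (Set.Ioi (s * I ω)) ∂μ =
      ∫⁻ ω, ENNReal.ofReal (Real.exp (-(s * I ω)) * psum (n + 1) (s * I ω)) ∂μ :=
    lintegral_congr fun ω => gamma_tail n (mul_nonneg hs.le (hI0 ω))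
  have hrepr : (fun ω => Real.exp (-(s * I ω)) * psum (n + 1) (s * I ω)) =
      fun ω => ∑ m ∈ Finset.range (n + 1),
        (s ^ m / (m.factorial : ℝ)) * (I ω ^ m * Real.exp (-(s * I ω))) := by
    funext ω
    rw [psum, Finset.mul_sum]
    exact Finset.sum_congr rfl fun m _ => by rw [mul_pow]; ring
  have hGint : Integrable (fun ω => Real.exp (-(s * I ω)) * psum (n + 1) (s * I ω)) μ := by
    rw [hrepr]
    exact integrable_finset_sum _ fun m _ => ((hint m s hs).const_mul _)
  have step3 : ∫⁻ ω, ENNReal.ofReal (Real.exp (-(s * I ω)) * psum (n + 1) (s * I ω)) ∂μ =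
      ENNReal.ofReal (∫ ω, Real.exp (-(s * I ω)) * psum (n + 1) (s * I ω) ∂μ) :=
    (ofReal_integral_eq_lintegral_ofReal hGint (ae_of_all _ fun ω =>
      mul_nonneg (Real.exp_pos _).le (psum_nonneg (mul_nonneg hs.le (hI0 ω))))).symm
  have step4 : ∫ ω, Real.exp (-(s * I ω)) * psum (n + 1) (s * I ω) ∂μ =
      ∑ m ∈ Finset.range (n + 1),
        ((-s) ^ m / (m.factorial : ℝ)) * iteratedDerivWithin m L (Set.Ioi 0) s := by
    rw [hrepr, integral_finset_sum _ fun m _ => ((hint m s hs).const_mul _)]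
    refine Finset.sum_congr rfl fun m _ => ?_
    rw [hiter m hs]
    simp only
    rw [integral_const_mul, neg_pow]
    have h4 : ((-1 : ℝ)) ^ m * (-1 : ℝ) ^ m = 1 := by
      rw [← mul_pow]; norm_num
    calc s ^ m / (m.factorial : ℝ) * ∫ ω, I ω ^ m * Real.exp (-(s * I ω)) ∂μ
        = (((-1 : ℝ)) ^ m * (-1 : ℝ) ^ m) *
            (s ^ m / (m.factorial : ℝ) * ∫ ω, I ω ^ m * Real.exp (-(s * I ω)) ∂μ) := by
          rw [h4, one_mul]
      _ = (-1 : ℝ) ^ m * s ^ m / (m.factorial : ℝ) *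
            ((-1 : ℝ) ^ m * ∫ ω, I ω ^ m * Real.exp (-(s * I ω)) ∂μ) := by ring
  rw [step1, step2, step3, step4]
end

section
/- Let N ≥ 1 be an integer and let a, l_1, …, l_{N−1}, y_0 be real numbers. Define y_1, …, y_{N−1} recursively by y_n = a·∑_{i=0}^{n−1} ((n−i)/n)·l_{n−i}·y_i. Let D be the N×N strictly lower-triangular Toeplitz matrix with D_{jk} = l_{j−k} for j > k and D_{jk} = 0 for j ≤ k (1-based indices). Then for every 0 ≤ n ≤ N−1, y_n = y_0 · (exp(a·D))_{n+1,1}, i.e., the vector (y_0, …, y_{N−1})^T equals y_0 times the first column of the matrix exponential exp(a·D). (This is the Toeplitz-matrix representation of the derivative recursion in the proof of the paper's Theorem 1.) -/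
/-!
Lower-triangular `N × N` Toeplitz matrices form a copy of the truncated power series ring
`ℝ⟦X⟧ / (X ^ N)`: sending `f` to the matrix with entries `coeff (j - k) f` below the diagonal is an
algebra homomorphism. So `D` is the image of `L = ∑_{k ≥ 1} l_k X^k`, the nilpotent exponential
`exp (a • D)` is the image of the partial sum `F = ∑_{k < N} (a L)^k / k!`, and the first column of
`exp (a • D)` is the coefficient sequence of `F`. Differentiating partial sums of the exponential
series gives `F_{K+1}' = a L' F_K`, and `F_{K+1} = F_K` below degree `K`; on coefficients this is
exactly the recursion
`n F_n = a ∑_{i < n} (n - i) l_{n - i} F_i`; since `F_0 = 1` and a solution of this recursion is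
determined by its initial value, `y_n = y_0 F_n`.
-/

open Finset PowerSeries
open scoped Nat

noncomputable def expPartialSum (𝕂 : Type*) {𝔸 : Type*} [Field 𝕂] [Ring 𝔸] [Algebra 𝕂 𝔸]
    (K : ℕ) (x : 𝔸) : 𝔸 :=
  ∑ k ∈ range K, (k !⁻¹ : 𝕂) • x ^ k

section expPartialSum

variable {𝕂 𝔸 𝔹 : Type*} [Field 𝕂] [Ring 𝔸] [Algebra 𝕂 𝔸] [Ring 𝔹] [Algebra 𝕂 𝔹]

theorem map_expPartialSum (f : 𝔸 →ₐ[𝕂] 𝔹) (K : ℕ) (x : 𝔸) :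
    f (expPartialSum 𝕂 K x) = expPartialSum 𝕂 K (f x) := by
  simp only [expPartialSum, map_sum, map_smul, map_pow]

theorem NormedSpace.exp_eq_expPartialSum [CharZero 𝕂] [TopologicalSpace 𝔸] [IsTopologicalRing 𝔸]
    {x : 𝔸} {K : ℕ} (hx : x ^ K = 0) : NormedSpace.exp x = expPartialSum 𝕂 K x := by
  rw [NormedSpace.exp_eq_tsum 𝕂]
  refine tsum_eq_sum fun k hk => ?_
  rw [pow_eq_zero_of_le (by simpa using hk) hx, smul_zero]

end expPartialSum

theorem PowerSeries.coeff_pow_eq_zero_of_lt {R : Type*} [CommSemiring R] {g : R⟦X⟧}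
    (hg : constantCoeff g = 0) {n k : ℕ} (h : n < k) : coeff n (g ^ k) = 0 :=
  X_pow_dvd_iff.mp (pow_dvd_pow_of_dvd (X_dvd_iff.mpr hg) k) n h

section lowerToeplitz

variable {R : Type*} [CommSemiring R]

theorem sum_fin_ite_mul_ite_eq_coeff_mul {N : ℕ} (f g : R⟦X⟧) (i j : Fin N) :
    ∑ m : Fin N, (if (m : ℕ) ≤ i then coeff (i - m : ℕ) f else 0) *
      (if (j : ℕ) ≤ m then coeff (m - j : ℕ) g else 0) =
    if (j : ℕ) ≤ i then coeff (i - j : ℕ) (f * g) else 0 := by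
  rw [Fin.sum_univ_eq_sum_range (fun m => (if m ≤ (i : ℕ) then coeff (i - m) f else 0) *
      (if (j : ℕ) ≤ m then coeff (m - j) g else 0)) N]
  split_ifs with hji
  · have hsub : Ico (j : ℕ) (i + 1) ⊆ range N := fun m hm => by
      simp only [mem_Ico, mem_range] at hm ⊢; omega
    rw [← sum_subset hsub fun m _ hm => by
      simp only [mem_Ico] at hm
      split_ifs <;> first | simp | (exfalso; omega)]
    rw [mul_comm, coeff_mul, Finset.Nat.sum_antidiagonal_eq_sum_range_succ
      (fun p q => coeff p g * coeff q f), sum_Ico_eq_sum_range]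
    refine sum_congr (by congr 1; omega) fun k hk => ?_
    simp only [mem_range] at hk
    rw [if_pos (by omega), if_pos (by omega), mul_comm, Nat.add_sub_cancel_left, Nat.sub_sub]
  · refine sum_eq_zero fun m _ => ?_
    split_ifs <;> first | simp | (exfalso; omega)

noncomputable def lowerToeplitz (N : ℕ) : R⟦X⟧ →ₐ[R] Matrix (Fin N) (Fin N) R where
  toFun f := Matrix.of fun i j => if (j : ℕ) ≤ i then coeff (i - j : ℕ) f else 0
  map_one' := by
    ext i j
    simp only [Matrix.of_apply, coeff_one, Matrix.one_apply, Fin.ext_iff]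
    split_ifs <;> first | rfl | (exfalso; omega)
  map_mul' f g := by
    ext i j
    simp only [Matrix.of_apply, Matrix.mul_apply, sum_fin_ite_mul_ite_eq_coeff_mul]
  map_zero' := by ext; simp
  map_add' f g := by ext; simp [ite_add_ite]
  commutes' r := by
    ext i j
    simp only [Matrix.of_apply, algebraMap_eq, coeff_C, Matrix.algebraMap_matrix_apply,
      Algebra.algebraMap_self, RingHom.id_apply, Fin.ext_iff]
    split_ifs <;> first | rfl | (exfalso; omega)

theorem lowerToeplitz_apply {N : ℕ} (f : R⟦X⟧) (i j : Fin N) :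
    lowerToeplitz N f i j = if (j : ℕ) ≤ i then coeff (i - j : ℕ) f else 0 := rfl

noncomputable def strictSymbol (l : ℕ → R) : R⟦X⟧ :=
  mk fun k => if k = 0 then 0 else l k

theorem constantCoeff_strictSymbol (l : ℕ → R) : constantCoeff (strictSymbol l) = 0 := by
  simp [strictSymbol]

theorem constantCoeff_smul_strictSymbol (a : R) (l : ℕ → R) :
    constantCoeff (a • strictSymbol l) = 0 := by
  rw [constantCoeff_smul, constantCoeff_strictSymbol, smul_zero]

theorem coeff_strictSymbol (l : ℕ → R) {k : ℕ} (hk : k ≠ 0) : coeff k (strictSymbol l) = l k := by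
  simp [strictSymbol, hk]

theorem lowerToeplitz_strictSymbol (N : ℕ) (l : ℕ → R) :
    lowerToeplitz N (strictSymbol l) =
      Matrix.of fun j k : Fin N => if (k : ℕ) < j then l (j - k : ℕ) else 0 := by
  ext j k
  rw [lowerToeplitz_apply, Matrix.of_apply]
  by_cases hkj : (k : ℕ) < j
  · rw [if_pos hkj, if_pos hkj.le, coeff_strictSymbol l (by omega)]
  · rw [if_neg hkj]
    split_ifs
    · rw [show (j : ℕ) - k = 0 by omega, coeff_zero_eq_constantCoeff_apply,
        constantCoeff_strictSymbol]
    · rfl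

theorem lowerToeplitz_pow_eq_zero {N : ℕ} {f : R⟦X⟧} (hf : constantCoeff f = 0) :
    lowerToeplitz N f ^ N = 0 := by
  ext i j
  rw [← map_pow, lowerToeplitz_apply]
  split_ifs
  · exact coeff_pow_eq_zero_of_lt hf (by omega)
  · rfl

end lowerToeplitz

theorem NormedSpace.exp_lowerToeplitz {𝕂 : Type*} [Field 𝕂] [CharZero 𝕂] [TopologicalSpace 𝕂]
    [IsTopologicalRing 𝕂] {N : ℕ} {f : 𝕂⟦X⟧} (hf : constantCoeff f = 0) :
    NormedSpace.exp (lowerToeplitz N f) = lowerToeplitz N (expPartialSum 𝕂 N f) := by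
  rw [map_expPartialSum, exp_eq_expPartialSum (𝕂 := 𝕂) (lowerToeplitz_pow_eq_zero hf)]

section PowerSeries

variable {𝕂 : Type*} [Field 𝕂]

theorem derivative_expPartialSum_succ [CharZero 𝕂] (g : 𝕂⟦X⟧) (K : ℕ) :
    d⁄dX 𝕂 (expPartialSum 𝕂 (K + 1) g) = d⁄dX 𝕂 g * expPartialSum 𝕂 K g := by
  rw [expPartialSum, sum_range_succ', expPartialSum, mul_sum, map_add, map_sum, pow_zero,
    Derivation.map_smul, Derivation.map_one_eq_zero, smul_zero, add_zero]
  refine sum_congr rfl fun k _ => ?_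
  have hk : C ((k + 1 : 𝕂)⁻¹) * ((k + 1 : ℕ) : 𝕂⟦X⟧) = 1 := by
    rw [← map_natCast (C (R := 𝕂)), ← map_mul, Nat.cast_succ,
      inv_mul_cancel₀ (Nat.cast_add_one_ne_zero k), map_one]
  rw [Derivation.map_smul, derivative_pow, Nat.add_sub_cancel, Algebra.smul_def,
    Algebra.smul_def, algebraMap_eq, Nat.factorial_succ, Nat.cast_mul, mul_inv, map_mul,
    Nat.cast_succ]
  linear_combination (C ((k ! : 𝕂)⁻¹) * g ^ k * d⁄dX 𝕂 g) * hk

theorem coeff_expPartialSum_succ_of_lt {g : 𝕂⟦X⟧} (hg : constantCoeff g = 0) {K n : ℕ}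
    (hn : n < K) : coeff n (expPartialSum 𝕂 (K + 1) g) = coeff n (expPartialSum 𝕂 K g) := by
  rw [expPartialSum, sum_range_succ, map_add, coeff_smul, coeff_pow_eq_zero_of_lt hg hn,
    smul_zero, add_zero, expPartialSum]

theorem coeff_zero_expPartialSum {g : 𝕂⟦X⟧} (hg : constantCoeff g = 0) {K : ℕ} (hK : 0 < K) :
    coeff 0 (expPartialSum 𝕂 K g) = 1 := by
  obtain ⟨K, rfl⟩ := Nat.exists_eq_add_of_lt hK
  rw [expPartialSum, sum_range_succ', map_add, map_sum]
  simp [coeff_pow_eq_zero_of_lt hg]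

theorem natCast_mul_coeff_expPartialSum [CharZero 𝕂] {g : 𝕂⟦X⟧} (hg : constantCoeff g = 0)
    {K n : ℕ} (hn : n < K) :
    n * coeff n (expPartialSum 𝕂 K g) =
      ∑ i ∈ range n, ((n - i : ℕ) : 𝕂) * coeff (n - i) g * coeff i (expPartialSum 𝕂 K g) := by
  rcases n with _ | m
  · simp
  have hderiv := congrArg (coeff m) (derivative_expPartialSum_succ g K)
  rw [coeff_derivative, coeff_expPartialSum_succ_of_lt hg hn, mul_comm (d⁄dX 𝕂 g), coeff_mul,
    Nat.sum_antidiagonal_eq_sum_range_succ (fun i j => coeff i _ * coeff j _)] at hderiv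
  rw [Nat.cast_succ, mul_comm, hderiv]
  refine sum_congr rfl fun i hi => ?_
  rw [coeff_derivative, show m + 1 - i = m - i + 1 by grind, Nat.cast_succ]
  ring

theorem coeff_expPartialSum_smul_strictSymbol [CharZero 𝕂] (a : 𝕂) (l : ℕ → 𝕂) {K n : ℕ}
    (h1 : 1 ≤ n) (hn : n < K) :
    coeff n (expPartialSum 𝕂 K (a • strictSymbol l)) = a * ∑ i ∈ range n,
      ((n - i : ℕ) : 𝕂) / n * l (n - i) * coeff i (expPartialSum 𝕂 K (a • strictSymbol l)) := by
  have hn0 : (n : 𝕂) ≠ 0 := Nat.cast_ne_zero.mpr (by omega)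
  calc _ = (n : 𝕂)⁻¹ * (n * coeff n (expPartialSum 𝕂 K (a • strictSymbol l))) := by field_simp
    _ = _ := by
      rw [natCast_mul_coeff_expPartialSum (constantCoeff_smul_strictSymbol a l) hn,
        mul_sum, mul_sum]
      refine sum_congr rfl fun i hi => ?_
      rw [coeff_smul, coeff_strictSymbol l (by simp at hi; omega), smul_eq_mul]
      field_simp

end PowerSeries

theorem eq_mul_of_same_recursion {R : Type*} [CommSemiring R] {M : ℕ} {c : R}
    {w : ℕ → ℕ → R} {y z : ℕ → R}
    (hy : ∀ n, 1 ≤ n → n ≤ M → y n = c * ∑ i ∈ range n, w n i * y i)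
    (hz : ∀ n, 1 ≤ n → n ≤ M → z n = c * ∑ i ∈ range n, w n i * z i) (hz0 : z 0 = 1) :
    ∀ n ≤ M, y n = y 0 * z n := by
  intro n
  induction n using Nat.strong_induction_on with
  | _ n ih =>
    intro hn
    rcases n with _ | n
    · rw [hz0, mul_one]
    rw [hy _ (by omega) hn, hz _ (by omega) hn, mul_sum, mul_sum, mul_sum]
    refine sum_congr rfl fun i hi => ?_
    rw [ih i (mem_range.mp hi) (by grind)]
    ring

/-- The Toeplitz-matrix representation of the derivative recursion in the proof of the paper's
Theorem 1: if `y_n = a·∑_{i=0}^{n−1} ((n−i)/n)·l_{n−i}·y_i` for `1 ≤ n ≤ N−1`, and `D` is the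
`N×N` strictly lower-triangular Toeplitz matrix with entries `D_{jk} = l_{j−k}` for `j > k`, then
`y_n = y_0 · (exp(a·D))_{n+1,1}` for every `0 ≤ n ≤ N−1`. -/
theorem recursion_eq_matrix_exp_column (N : ℕ) (hN : 1 ≤ N)
    (a : ℝ) (l : ℕ → ℝ) (y : ℕ → ℝ)
    (hrec : ∀ n : ℕ, 1 ≤ n → n ≤ N - 1 →
      y n = a * ∑ i ∈ Finset.range n, (((n - i : ℕ) : ℝ) / (n : ℝ)) * l (n - i) * y i)
    (D : Matrix (Fin N) (Fin N) ℝ)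
    (hD : ∀ j k : Fin N, D j k = if (k : ℕ) < (j : ℕ) then l ((j : ℕ) - (k : ℕ)) else 0) :
    ∀ n : ℕ, ∀ hn : n < N,
      y n = y 0 * (NormedSpace.exp (a • D)) ⟨n, hn⟩ ⟨0, hN⟩ := by
  intro n hn
  have hDsymbol : D = lowerToeplitz N (strictSymbol l) := by
    rw [lowerToeplitz_strictSymbol]
    exact Matrix.ext hD
  have hsymbol := constantCoeff_smul_strictSymbol a l
  rw [hDsymbol, ← map_smul, NormedSpace.exp_lowerToeplitz hsymbol, lowerToeplitz_apply,
    if_pos (Nat.zero_le _)]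
  exact eq_mul_of_same_recursion (w := fun n i => ((n - i : ℕ) : ℝ) / n * l (n - i)) hrec
    (fun m h1 _ => coeff_expPartialSum_smul_strictSymbol a l h1 (by omega))
    (coeff_zero_expPartialSum hsymbol hN) n (by omega)
end

section
/- The function t ↦ P_c(t) is monotone nondecreasing on [0,1]. (This is property 2 of the paper's Lemma 3: the successful transmission probability of a cached file increases with its caching probability.) -/
open MeasureTheory Finset

/-- `L_0(t) = 2t·∫_1^∞ τu/(u^β+τ) du + 2(1−t)·∫_0^∞ τu/(u^β+τ) du`. -/
noncomputable def L0 (β τ t : ℝ) : ℝ :=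
  2 * t * (∫ u in Set.Ioi (1 : ℝ), τ * u / (u ^ β + τ)) +
    2 * (1 - t) * (∫ u in Set.Ioi (0 : ℝ), τ * u / (u ^ β + τ))

/-- `L_i(t) = 2t·∫_1^∞ τ^i u^{β+1}/(u^β+τ)^{i+1} du + 2(1−t)·∫_0^∞ τ^i u^{β+1}/(u^β+τ)^{i+1} du`
for integers `i ≥ 1`. -/
noncomputable def Li (β τ : ℝ) (i : ℕ) (t : ℝ) : ℝ :=
  2 * t * (∫ u in Set.Ioi (1 : ℝ), τ ^ i * u ^ (β + 1) / (u ^ β + τ) ^ (i + 1)) +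
    2 * (1 - t) * (∫ u in Set.Ioi (0 : ℝ), τ ^ i * u ^ (β + 1) / (u ^ β + τ) ^ (i + 1))

/-- The strictly lower-triangular Toeplitz matrix `D(t)` with `(D(t))_{jk} = L_{j−k}(t)` for
`j > k` and `0` otherwise. -/
noncomputable def Dmat (β τ : ℝ) (N : ℕ) (t : ℝ) : Matrix (Fin N) (Fin N) ℝ :=
  fun j k => if (k : ℕ) < (j : ℕ) then Li β τ ((j : ℕ) - (k : ℕ)) t else 0

/-- The induced `ℓ1` matrix norm `‖M‖₁ = max_{1≤j≤N} ∑_{i=1}^N |M_{ij}|`. -/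
noncomputable def matNorm1 {N : ℕ} (M : Matrix (Fin N) (Fin N) ℝ) : ℝ :=
  ⨆ j : Fin N, ∑ i : Fin N, |M i j|

/-- The successful transmission probability of a cached file stored with caching probability `t`:
`P_c(t) = (t/(t+L_0(t)))·‖(I − (1/(t+L_0(t)))·D(t))^{−1}‖₁`. -/
noncomputable def Pc (β τ : ℝ) (N : ℕ) (t : ℝ) : ℝ :=
  (t / (t + L0 β τ t)) *
    matNorm1 ((1 - (1 / (t + L0 β τ t)) • Dmat β τ N t)⁻¹)

/-!
Write `s(t) = t + L₀(t)` and let `w_t` be the power series `s(t) - ∑_{i ≥ 1} L_i(t) X^i`.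
Lower-triangular Toeplitz matrices represent `ℝ⟦X⟧ ⧸ (X ^ N)`, so `(I - D(t)/s(t))⁻¹` is the
Toeplitz matrix of `s(t) w_t⁻¹`; as `w_t` has positive constant term and nonpositive other
coefficients, `w_t⁻¹` has nonnegative coefficients and `P_c(t) = t ∑_{m<N} [X^m] w_t⁻¹`.
Since `w_t` is affine in `t`, `t₂ w_{t₁} - t₁ w_{t₂} = (t₂ - t₁) w_0`, hence
`t₂ w_{t₂}⁻¹ - t₁ w_{t₁}⁻¹ = (t₂ - t₁) w_0 w_{t₁}⁻¹ w_{t₂}⁻¹`. The coefficients of `w_0` have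
nonnegative partial sums, and multiplying by series with nonnegative coefficients keeps that.
-/

namespace PowerSeries

theorem coeff_mul_mk_one {R : Type*} [Semiring R] (φ : R⟦X⟧) (n : ℕ) :
    coeff n (φ * mk 1) = ∑ i ∈ range (n + 1), coeff i φ := by
  simp [coeff_mul, Finset.Nat.sum_antidiagonal_eq_sum_range_succ_mk]

theorem coeff_mul_nonneg {R : Type*} [Semiring R] [PartialOrder R] [IsOrderedRing R]
    {φ ψ : R⟦X⟧} (hφ : ∀ n, 0 ≤ coeff n φ) (hψ : ∀ n, 0 ≤ coeff n ψ) (n : ℕ) :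
    0 ≤ coeff n (φ * ψ) := by
  rw [coeff_mul]
  exact Finset.sum_nonneg fun p _ => mul_nonneg (hφ p.1) (hψ p.2)

theorem sum_range_coeff_mul_nonneg {R : Type*} [CommSemiring R] [PartialOrder R]
    [IsOrderedRing R] {φ ψ : R⟦X⟧} (hφ : ∀ n, 0 ≤ ∑ i ∈ range n, coeff i φ)
    (hψ : ∀ n, 0 ≤ coeff n ψ) (N : ℕ) : 0 ≤ ∑ m ∈ range N, coeff m (φ * ψ) := by
  rcases N with _ | n
  · simp
  · rw [← coeff_mul_mk_one, mul_right_comm]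
    exact coeff_mul_nonneg (fun n => (coeff_mul_mk_one φ n).symm ▸ hφ (n + 1)) hψ n

theorem coeff_inv_nonneg {k : Type*} [Field k] [LinearOrder k] [IsStrictOrderedRing k]
    {φ : k⟦X⟧} (h₀ : 0 < constantCoeff φ) (h : ∀ n, coeff (n + 1) φ ≤ 0) (n : ℕ) :
    0 ≤ coeff n φ⁻¹ := by
  induction n using Nat.strong_induction_on with
  | _ n ih =>
    rw [coeff_inv]
    split_ifs with hn
    · exact inv_nonneg.2 h₀.le
    refine mul_nonneg_of_nonpos_of_nonpos (neg_nonpos.2 (inv_nonneg.2 h₀.le)) ?_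
    refine Finset.sum_nonpos fun p hp => ?_
    split_ifs with hp₂
    · obtain ⟨i, hi⟩ : ∃ i, p.1 = i + 1 :=
        Nat.exists_eq_add_one.2 (by rw [HasAntidiagonal.mem_antidiagonal] at hp; omega)
      exact mul_nonpos_of_nonpos_of_nonneg (hi ▸ h i) (ih _ hp₂)
    · exact le_rfl

/-- The matrix of multiplication by `φ` on `R⟦X⟧ ⧸ (X ^ N)` in the monomial basis. -/
noncomputable def toeplitz {R : Type*} [Semiring R] (N : ℕ) (φ : R⟦X⟧) : Matrix (Fin N) (Fin N) R :=
  Matrix.of fun i j => if (j : ℕ) ≤ i then coeff ((i : ℕ) - j) φ else 0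

section Toeplitz

variable {R : Type*} [Semiring R] {N : ℕ}

theorem toeplitz_apply (φ : R⟦X⟧) (i j : Fin N) :
    toeplitz N φ i j = if (j : ℕ) ≤ i then coeff ((i : ℕ) - j) φ else 0 := rfl

theorem toeplitz_one : toeplitz N (1 : R⟦X⟧) = 1 := by
  ext i j
  simp only [toeplitz_apply, coeff_one, Matrix.one_apply, Fin.ext_iff]
  split_ifs <;> first | rfl | (exfalso; omega)

theorem toeplitz_mul (φ ψ : R⟦X⟧) : toeplitz N (φ * ψ) = toeplitz N φ * toeplitz N ψ := by
  ext i j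
  simp only [Matrix.mul_apply, toeplitz_apply, ite_mul, mul_ite, zero_mul, mul_zero, ← ite_and,
    ← Finset.sum_filter]
  split_ifs with hji
  · rw [coeff_mul]
    refine Finset.sum_bij' (fun p hp => ⟨j + p.2, ?_⟩) (fun l _ => ((i : ℕ) - l, (l : ℕ) - j))
      ?_ ?_ ?_ ?_ ?_ <;> simp only [HasAntidiagonal.mem_antidiagonal, Finset.mem_filter,
        Finset.mem_univ, true_and, Fin.ext_iff, Prod.ext_iff] at *
    · omega
    all_goals intro _ _
    · omega
    · omega
    · omega
    · omega
    · congr 2 <;> grind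
  · refine (Finset.sum_eq_zero fun l hl => ?_).symm
    simp only [Finset.mem_filter] at hl
    omega

theorem toeplitz_inv {k : Type*} [Field k] {φ : k⟦X⟧} (h : constantCoeff φ ≠ 0) :
    (toeplitz N φ)⁻¹ = toeplitz N φ⁻¹ :=
  Matrix.inv_eq_right_inv <| by rw [← toeplitz_mul, PowerSeries.mul_inv_cancel φ h, toeplitz_one]

end Toeplitz

end PowerSeries

open PowerSeries

theorem sum_abs_toeplitz_apply {N : ℕ} {φ : ℝ⟦X⟧} (hφ : ∀ n, 0 ≤ coeff n φ) (j : Fin N) :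
    ∑ i, |toeplitz N φ i j| = ∑ m ∈ range (N - j), coeff m φ := by
  simp only [toeplitz_apply]
  rw [Fin.sum_univ_eq_sum_range (fun i => |if (j : ℕ) ≤ i then coeff (i - j) φ else 0|),
    ← Finset.sum_range_add_sum_Ico _ j.isLt.le, Finset.sum_Ico_eq_sum_range,
    Finset.sum_eq_zero fun i hi => by simp [Finset.mem_range.1 hi], zero_add]
  simp [abs_of_nonneg (hφ _)]

theorem matNorm1_toeplitz {N : ℕ} {φ : ℝ⟦X⟧} (hφ : ∀ n, 0 ≤ coeff n φ) :
    matNorm1 (toeplitz N φ) = ∑ m ∈ range N, coeff m φ := by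
  rcases N with _ | n
  · simp [matNorm1]
  unfold matNorm1
  simp_rw [sum_abs_toeplitz_apply hφ]
  refine le_antisymm (ciSup_le fun j => ?_) (le_ciSup_of_le (Set.finite_range _).bddAbove 0 ?_)
  · exact Finset.sum_le_sum_of_subset_of_nonneg (Finset.range_subset_range.2 (Nat.sub_le _ _))
      fun m _ _ => hφ m
  · simp

section CachedFile

open Set

variable {β τ : ℝ}

theorem integrableOn_Ioi_zero_L0_integrand (hβ : 2 < β) (hτ : 0 < τ) :
    IntegrableOn (fun u : ℝ => τ * u / (u ^ β + τ)) (Ioi 0) := by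
  rw [← Ioc_union_Ioi_eq_Ioi zero_le_one]
  refine IntegrableOn.union ?_ ?_
  · refine (ContinuousOn.integrableOn_Icc ?_).mono_set Ioc_subset_Icc_self
    refine (continuous_const.mul continuous_id).continuousOn.div ?_ fun u hu => ?_
    · exact ((continuous_id.rpow_const fun _ => Or.inr (by linarith)).add
        continuous_const).continuousOn
    · have := Real.rpow_nonneg hu.1 β
      positivity
  · refine Integrable.mono' ((integrableOn_Ioi_rpow_of_lt (by linarith : 1 - β < -1)
      one_pos).const_mul τ) (by fun_prop : Measurable _).aestronglyMeasurable
      (ae_restrict_of_forall_mem measurableSet_Ioi fun u (hu : 1 < u) => ?_)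
    have hu₀ : 0 < u := one_pos.trans hu
    rw [Real.norm_of_nonneg (by positivity), Real.rpow_sub hu₀, Real.rpow_one, ← mul_div_assoc]
    exact div_le_div_of_nonneg_left (by positivity) (by positivity) (by linarith)

theorem setIntegral_Ioi_zero_L0_integrand_pos (hβ : 2 < β) (hτ : 0 < τ) :
    0 < ∫ u in Ioi 0, τ * u / (u ^ β + τ) := by
  have hpos : ∀ u ∈ Ioi (0 : ℝ), 0 < τ * u / (u ^ β + τ) := fun u (hu : 0 < u) => by positivity
  have hsupp : Ioi (0 : ℝ) ⊆ Function.support fun u : ℝ => τ * u / (u ^ β + τ) :=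
    fun u hu => (hpos u hu).ne'
  rw [setIntegral_pos_iff_support_of_nonneg_ae
      (ae_restrict_of_forall_mem measurableSet_Ioi fun u hu => (hpos u hu).le)
      (integrableOn_Ioi_zero_L0_integrand hβ hτ),
    inter_eq_right.2 hsupp, Real.volume_Ioi]
  exact ENNReal.zero_lt_top

/-- With `r = τ / (u ^ β + τ)`, the `i`-th summand is `τ u / (u ^ β + τ) · (1 - r) r ^ i`, so
the sum telescopes to `τ u / (u ^ β + τ) · (1 - r ^ n)`. -/
theorem sum_range_Li_integrand_le (hτ : 0 < τ) {u : ℝ} (hu : 0 < u) (n : ℕ) :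
    ∑ i ∈ range n, τ ^ (i + 1) * u ^ (β + 1) / (u ^ β + τ) ^ (i + 1 + 1) ≤
      τ * u / (u ^ β + τ) := by
  have hd : 0 < u ^ β + τ := by positivity
  have hterm : ∀ i, τ ^ (i + 1) * u ^ (β + 1) / (u ^ β + τ) ^ (i + 1 + 1) =
      τ * u / (u ^ β + τ) * ((1 - τ / (u ^ β + τ)) * (τ / (u ^ β + τ)) ^ i) := fun i => by
    rw [div_pow, Real.rpow_add_one hu.ne']
    field_simp
    ring
  rw [Finset.sum_congr rfl fun i _ => hterm i, ← Finset.mul_sum, ← Finset.mul_sum,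
    mul_neg_geom_sum]
  exact mul_le_of_le_one_right (by positivity) (sub_le_self _ (by positivity))

theorem sum_range_setIntegral_Li_integrand_le (hβ : 2 < β) (hτ : 0 < τ) (n : ℕ) :
    ∑ i ∈ range n, ∫ u in Ioi 0, τ ^ (i + 1) * u ^ (β + 1) / (u ^ β + τ) ^ (i + 1 + 1) ≤
      ∫ u in Ioi 0, τ * u / (u ^ β + τ) := by
  have hint : ∀ i, IntegrableOn
      (fun u : ℝ => τ ^ (i + 1) * u ^ (β + 1) / (u ^ β + τ) ^ (i + 1 + 1)) (Ioi 0) := fun i =>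
    Integrable.mono' (integrableOn_Ioi_zero_L0_integrand hβ hτ)
      (by fun_prop : Measurable _).aestronglyMeasurable
      (ae_restrict_of_forall_mem measurableSet_Ioi fun u (hu : 0 < u) => by
        rw [Real.norm_of_nonneg (by positivity)]
        exact (Finset.single_le_sum (fun j _ => by positivity) (Finset.self_mem_range_succ i)).trans
          (sum_range_Li_integrand_le hτ hu (i + 1)))
  rw [← integral_finsetSum _ fun i _ => hint i]
  exact setIntegral_mono_on (integrable_finsetSum _ fun i _ => hint i)
    (integrableOn_Ioi_zero_L0_integrand hβ hτ) measurableSet_Ioi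
    fun u hu => sum_range_Li_integrand_le hτ hu n

theorem Li_nonneg (hτ : 0 < τ) (i : ℕ) {t : ℝ} (ht : t ∈ Set.Icc 0 1) : 0 ≤ Li β τ i t := by
  have hint : ∀ a : ℝ, 0 ≤ a → 0 ≤ ∫ u in Ioi a, τ ^ i * u ^ (β + 1) / (u ^ β + τ) ^ (i + 1) :=
    fun a ha => setIntegral_nonneg measurableSet_Ioi fun u hu => by
      have : 0 < u := ha.trans_lt hu
      positivity
  have := ht.1
  have := sub_nonneg.2 ht.2
  exact add_nonneg (mul_nonneg (by positivity) (hint 1 zero_le_one))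
    (mul_nonneg (by positivity) (hint 0 le_rfl))

theorem add_L0_pos (hβ : 2 < β) (hτ : 0 < τ) {t : ℝ} (ht : t ∈ Set.Icc 0 1) : 0 < t + L0 β τ t := by
  have hA : 0 ≤ ∫ u in Ioi 1, τ * u / (u ^ β + τ) :=
    setIntegral_nonneg measurableSet_Ioi fun u (hu : 1 < u) => by
      have : 0 < u := one_pos.trans hu
      positivity
  have hB := setIntegral_Ioi_zero_L0_integrand_pos hβ hτ
  unfold L0
  rcases ht.1.eq_or_lt with rfl | ht₀
  · linarith
  · nlinarith [mul_nonneg ht.1 hA, mul_nonneg (sub_nonneg.2 ht.2) hB.le]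

noncomputable def pcSymbol (β τ t : ℝ) : ℝ⟦X⟧ :=
  mk fun n => if n = 0 then t + L0 β τ t else -Li β τ n t

theorem constantCoeff_pcSymbol (t : ℝ) : constantCoeff (pcSymbol β τ t) = t + L0 β τ t := by
  simp [pcSymbol, ← coeff_zero_eq_constantCoeff_apply]

theorem coeff_succ_pcSymbol_nonpos (hτ : 0 < τ) {t : ℝ} (ht : t ∈ Set.Icc 0 1) (n : ℕ) :
    coeff (n + 1) (pcSymbol β τ t) ≤ 0 := by
  simpa [pcSymbol] using Li_nonneg hτ (n + 1) ht

theorem sum_range_coeff_pcSymbol_zero_nonneg (hβ : 2 < β) (hτ : 0 < τ) (n : ℕ) :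
    0 ≤ ∑ i ∈ range n, coeff i (pcSymbol β τ 0) := by
  rcases n with _ | n
  · simp
  rw [Finset.sum_range_succ']
  simp only [pcSymbol, coeff_mk, Nat.add_one_ne_zero, if_false, if_true, Li, L0]
  have := sum_range_setIntegral_Li_integrand_le hβ hτ n
  simp only [mul_zero, zero_mul, sub_zero, mul_one, zero_add, Finset.sum_neg_distrib,
    ← Finset.mul_sum]
  linarith

theorem pcSymbol_affine (t₁ t₂ : ℝ) :
    C t₂ * pcSymbol β τ t₁ - C t₁ * pcSymbol β τ t₂ = C (t₂ - t₁) * pcSymbol β τ 0 := by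
  ext n
  rw [map_sub, coeff_C_mul, coeff_C_mul, coeff_C_mul]
  simp only [pcSymbol, coeff_mk, L0, Li]
  split_ifs <;> ring

theorem one_sub_smul_Dmat (N : ℕ) {t : ℝ} (ht : t + L0 β τ t ≠ 0) :
    1 - (1 / (t + L0 β τ t)) • Dmat β τ N t =
      toeplitz N (C (t + L0 β τ t)⁻¹ * pcSymbol β τ t) := by
  ext i j
  simp only [toeplitz_apply, coeff_C_mul, pcSymbol, coeff_mk, Matrix.sub_apply, Matrix.one_apply,
    Matrix.smul_apply, Dmat, smul_eq_mul, Fin.ext_iff]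
  split_ifs <;> first | (exfalso; omega) | (field_simp; ring)

theorem coeff_pcSymbol_inv_nonneg (hβ : 2 < β) (hτ : 0 < τ) {t : ℝ} (ht : t ∈ Set.Icc 0 1)
    (n : ℕ) : 0 ≤ coeff n (pcSymbol β τ t)⁻¹ :=
  coeff_inv_nonneg (constantCoeff_pcSymbol t ▸ add_L0_pos hβ hτ ht)
    (coeff_succ_pcSymbol_nonpos hτ ht) n

theorem Pc_eq_mul_sum_coeff_inv (hβ : 2 < β) (hτ : 0 < τ) (N : ℕ) {t : ℝ}
    (ht : t ∈ Set.Icc 0 1) :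
    Pc β τ N t = t * ∑ m ∈ range N, coeff m (pcSymbol β τ t)⁻¹ := by
  have hs := add_L0_pos hβ hτ ht
  have hunit : constantCoeff (C (t + L0 β τ t)⁻¹ * pcSymbol β τ t) ≠ 0 := by
    simp [constantCoeff_pcSymbol, hs.ne']
  rw [Pc, one_sub_smul_Dmat N hs.ne', toeplitz_inv hunit, PowerSeries.mul_inv_rev, C_inv, inv_inv,
    matNorm1_toeplitz fun m => by
      rw [coeff_mul_C]; exact mul_nonneg (coeff_pcSymbol_inv_nonneg hβ hτ ht m) hs.le]
  simp only [coeff_mul_C, ← Finset.sum_mul]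
  field_simp

theorem Pc_sub_Pc (hβ : 2 < β) (hτ : 0 < τ) (N : ℕ) {t₁ t₂ : ℝ} (ht₁ : t₁ ∈ Set.Icc 0 1)
    (ht₂ : t₂ ∈ Set.Icc 0 1) :
    Pc β τ N t₂ - Pc β τ N t₁ = (t₂ - t₁) *
      ∑ m ∈ range N, coeff m (pcSymbol β τ 0 * ((pcSymbol β τ t₁)⁻¹ * (pcSymbol β τ t₂)⁻¹)) := by
  have h₁ := PowerSeries.mul_inv_cancel _
    (constantCoeff_pcSymbol t₁ ▸ add_L0_pos hβ hτ ht₁).ne'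
  have h₂ := PowerSeries.mul_inv_cancel _
    (constantCoeff_pcSymbol t₂ ▸ add_L0_pos hβ hτ ht₂).ne'
  have key : C t₂ * (pcSymbol β τ t₂)⁻¹ - C t₁ * (pcSymbol β τ t₁)⁻¹ =
      C (t₂ - t₁) * (pcSymbol β τ 0 * ((pcSymbol β τ t₁)⁻¹ * (pcSymbol β τ t₂)⁻¹)) := by
    rw [← mul_assoc, ← pcSymbol_affine]
    linear_combination (C t₁ * (pcSymbol β τ t₁)⁻¹) * h₂ - (C t₂ * (pcSymbol β τ t₂)⁻¹) * h₁
  rw [Pc_eq_mul_sum_coeff_inv hβ hτ N ht₁, Pc_eq_mul_sum_coeff_inv hβ hτ N ht₂, Finset.mul_sum,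
    Finset.mul_sum, Finset.mul_sum, ← Finset.sum_sub_distrib]
  refine Finset.sum_congr rfl fun m _ => ?_
  simpa only [LinearMap.map_sub, coeff_C_mul] using congrArg (coeff m) key

end CachedFile

theorem Pc_monotoneOn_general (β τ : ℝ) (hβ : 2 < β) (hτ : 0 < τ) (N : ℕ) :
    MonotoneOn (Pc β τ N) (Set.Icc 0 1) := by
  intro t₁ ht₁ t₂ ht₂ h
  rw [← sub_nonneg, Pc_sub_Pc hβ hτ N ht₁ ht₂]
  exact mul_nonneg (sub_nonneg.2 h) (sum_range_coeff_mul_nonneg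
    (sum_range_coeff_pcSymbol_zero_nonneg hβ hτ)
    (coeff_mul_nonneg (coeff_pcSymbol_inv_nonneg hβ hτ ht₁) (coeff_pcSymbol_inv_nonneg hβ hτ ht₂))
    N)

/-- **Property 2 of the paper's Lemma 3**: the successful transmission probability of a cached
file, `t ↦ P_c(t)`, is monotone nondecreasing on `[0,1]`. -/
theorem Pc_monotoneOn (β τ : ℝ) (hβ : 2 < β) (hτ : 0 < τ) (N : ℕ) (hN : 1 ≤ N) :
    MonotoneOn (Pc β τ N) (Set.Icc 0 1) :=
  Pc_monotoneOn_general β τ hβ hτ N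
end
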